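/- Let (α_n)_{n=0}^∞ be real numbers with α_0 = 0, let n ∈ ℤ_{≥0}, and let a be a bounded linear operator on L^p(μ_{≥0}) that is supported on coordinates ≤ n, meaning there exists a bounded linear operator c on L^p(μ_{≤n}) such that for all ξ ∈ L^p(μ_{≤n}) and η ∈ L^p(μ_{≥n+1}), a maps the product function (x_0,…,x_n,𝐱) ↦ ξ(x_0,…,x_n)η(𝐱) to the product function (x_0,…,x_n,𝐱) ↦ (cξ)(x_0,…,x_n)η(𝐱). Then: (i) a maps range(P_m) into range(P_m) for every m ≥ n, so a maps the domain 𝒟 = ⋃_m range(P_m) into itself; (ii) for every η ∈ 𝒟, D(aη) − a(Dη) = Σ_{k=1}^n α_k (Q_k(aη) − a(Q_kη)), where Dζ = Σ_{m=1}^∞ α_m Q_m ζ (a finite sum for ζ ∈ 𝒟); and (iii) there exists C ≥ 0 such that ‖D(aη) − a(Dη)‖_p ≤ C‖η‖_p for all η ∈ 𝒟, i.e., the commutator [D, a] is bounded on 𝒟. -/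

import Mathlib

noncomputable section
open MeasureTheory Filter
open scoped ENNReal Topology

/-- A measure `ν` on a product space is *the* product of the measures `m i` if it assigns
the product value to every finite-dimensional cylinder set. -/
def IsProductMeasure {ι : Type*} {Y : ι → Type*} [∀ i, MeasurableSpace (Y i)]
    (m : ∀ i, Measure (Y i)) (ν : Measure (∀ i, Y i)) : Prop :=
  ∀ (F : Finset ι) (s : ∀ i, Set (Y i)), (∀ i, MeasurableSet (s i)) →
    ν {x | ∀ i ∈ F, x i ∈ s i} = ∏ i ∈ F, m i (s i)

variable {X : ℕ → Type*}

/-- The product measure `μ_{≤ n}` on `X_0 × ⋯ × X_n`. -/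
def muLe [∀ j, MeasurableSpace (X j)] (μ : ∀ j, Measure (X j)) (n : ℕ) :
    Measure (∀ j : Fin (n + 1), X j) :=
  Measure.pi (fun j => μ j)

/-- Splicing a point of `X_{≤ n}` with a point of `X_{≥ n+1}` gives a point of `X_{≥ 0}`. -/
def splice (n : ℕ) (x : ∀ j : Fin (n + 1), X j) (y : ∀ j : ℕ, X (n + 1 + j)) :
    ∀ j : ℕ, X j := fun j =>
  if h : j < n + 1 then x ⟨j, h⟩
  else cast (congrArg X (by omega : n + 1 + (j - (n + 1)) = j)) (y (j - (n + 1)))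

/-- The inclusion map `ι_n` at the level of functions: `(ι_n ξ)(x₀,…,xₙ,𝐱) = ξ(x₀,…,xₙ)`. -/
def iotaFun (n : ℕ) (ξ : (∀ j : Fin (n + 1), X j) → ℂ) : (∀ j : ℕ, X j) → ℂ :=
  fun x => ξ (fun j => x j)

/-- The projection map `π_n` at the level of functions:
`(π_n η)(x₀,…,xₙ) = ∫_{X_{≥ n+1}} η(x₀,…,xₙ,𝐱) dμ_{≥ n+1}(𝐱)`. -/
def piFun [∀ j, MeasurableSpace (X j)] (νtail : ∀ k, Measure (∀ j : ℕ, X (k + j)))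
    (n : ℕ) (η : (∀ j : ℕ, X j) → ℂ) : (∀ j : Fin (n + 1), X j) → ℂ :=
  fun x => ∫ y, η (splice n x y) ∂(νtail (n + 1))

/-- The idempotent `P_n = ι_n ∘ π_n` at the level of functions. -/
def PnFun [∀ j, MeasurableSpace (X j)] (νtail : ∀ k, Measure (∀ j : ℕ, X (k + j)))
    (n : ℕ) (η : (∀ j : ℕ, X j) → ℂ) : (∀ j : ℕ, X j) → ℂ :=
  iotaFun n (piFun νtail n η)

/-- `Q_0 = P_0` and `Q_n = P_n - P_{n-1}` for `n ≥ 1`, at the level of functions. -/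
def QnFun [∀ j, MeasurableSpace (X j)] (νtail : ∀ k, Measure (∀ j : ℕ, X (k + j))) :
    ℕ → ((∀ j : ℕ, X j) → ℂ) → ((∀ j : ℕ, X j) → ℂ)
  | 0 => PnFun νtail 0
  | n + 1 => fun η => PnFun νtail (n + 1) η - PnFun νtail n η

/-- The elementary tensor `ξ ⊗ η` of a function on `X_{≤ n}` and a function on `X_{≥ n+1}`,
as a function on `X_{≥ 0}`. -/
def tensFun (n : ℕ) (ξ : (∀ j : Fin (n + 1), X j) → ℂ)
    (η : (∀ j : ℕ, X (n + 1 + j)) → ℂ) : (∀ j : ℕ, X j) → ℂ :=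
  fun x => ξ (fun j => x j) * η (fun j => x (n + 1 + j))

/-- Splicing a point of `X_{(n,m]}` (the first `m - n` coordinates of `X_{≥ n+1}`) with a
point of `X_{≥ m+1}` gives a point of `X_{≥ n+1}`. -/
def spliceMid {n m : ℕ} (hnm : n ≤ m) (y : ∀ j : ℕ, X (n + 1 + j))
    (w : ∀ j : ℕ, X (m + 1 + j)) : ∀ j : ℕ, X (n + 1 + j) := fun j =>
  if h : j < m - n then y j
  else cast (congrArg X (by omega : m + 1 + (j - (m - n)) = n + 1 + j)) (w (j - (m - n)))

/-- The operator `P_{m,n}` on functions on `X_{≥ n+1}`: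
`(P_{m,n} ζ)(x_{n+1},…,x_m,𝐳) = ∫_{X_{≥ m+1}} ζ(x_{n+1},…,x_m,𝐰) dμ_{≥ m+1}(𝐰)`. -/
def PtailFun [∀ j, MeasurableSpace (X j)] (νtail : ∀ k, Measure (∀ j : ℕ, X (k + j)))
    {n m : ℕ} (hnm : n ≤ m) (ζ : (∀ j : ℕ, X (n + 1 + j)) → ℂ) :
    (∀ j : ℕ, X (n + 1 + j)) → ℂ :=
  fun y => ∫ w, ζ (spliceMid hnm y w) ∂(νtail (m + 1))

/-!
Under a product measure the coordinates are independent, so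
`x ↦ ((x_0,…,x_n), (x_{n+1},…))` is a measure-preserving isomorphism
`X_{≥ 0} ≃ X_{≤ n} × X_{≥ n+1}`. For `k ≥ n` this makes `P_k` act on an elementary tensor through
its tail factor only, `P_k (ξ ⊗ η) = ξ ⊗ P_{k,n} η`, while `a (ξ ⊗ η) = c ξ ⊗ η` acts through the
head factor only; hence `P_k a = a P_k` on tensors. Indicators of rectangles `A × B` are tensors,
so by a π-λ argument the tensors span a dense subspace of `L^p(μ_{≥ 0})`, and `P_k a = a P_k`
for all `k ≥ n`. Thus `Q_k a = a Q_k` for `k > n`, and in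
`D a η - a D η = Σ_k α_k (Q_k a η - a Q_k η)` only the terms with `k ≤ n` survive: a fixed
finite combination of bounded operators.
-/

section ProductMeasure

open ProbabilityTheory

variable {ι : Type*} {Y : ι → Type*} [∀ i, MeasurableSpace (Y i)]

theorem measurable_cast_congrArg {i i' : ι} (h : i = i') :
    Measurable (cast (congrArg Y h)) := by
  subst h; exact measurable_id

variable {μ : ∀ i, Measure (Y i)} [∀ i, IsProbabilityMeasure (μ i)] {ν : Measure (∀ i, Y i)}

theorem IsProductMeasure.eq_infinitePi (h : IsProductMeasure μ ν) : ν = Measure.infinitePi μ :=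
  Measure.eq_infinitePi μ h

theorem IsProductMeasure.iIndepFun_eval (h : IsProductMeasure μ ν) :
    iIndepFun (fun i (x : ∀ i, Y i) => x i) ν := by
  obtain rfl := h.eq_infinitePi
  rw [iIndepFun_iff_map_fun_eq_infinitePi_map (fun i => measurable_pi_apply i), Measure.map_id']
  simp_rw [Measure.infinitePi_map_eval]

theorem IsProductMeasure.map_comp_eq_infinitePi (h : IsProductMeasure μ ν) {κ : Type*}
    {g : κ → ι} (hg : g.Injective) :
    ν.map (fun x k => x (g k)) = Measure.infinitePi (fun k => μ (g k)) := by
  rw [(h.iIndepFun_eval.precomp hg).map_fun_eq_infinitePi_map (fun k => measurable_pi_apply _)]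
  obtain rfl := h.eq_infinitePi
  simp_rw [Measure.infinitePi_map_eval]

end ProductMeasure

section Independence

open ProbabilityTheory

variable {Ω ι : Type*} {mΩ : MeasurableSpace Ω} {P : Measure Ω} {β : ι → Type*}
  [∀ i, MeasurableSpace (β i)] {f : ∀ i, Ω → β i}

theorem MeasurableSpace.comap_pi_comp_le_iSup {κ : Type*} (g : κ → ι) :
    MeasurableSpace.comap (fun ω k => f (g k) ω) MeasurableSpace.pi ≤
      ⨆ i ∈ Set.range g, MeasurableSpace.comap (f i) inferInstance := by
  rw [MeasurableSpace.pi, MeasurableSpace.comap_iSup]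
  refine iSup_le fun k => ?_
  rw [MeasurableSpace.comap_comp]
  exact le_iSup₂_of_le (g k) ⟨k, rfl⟩ le_rfl

theorem ProbabilityTheory.iIndepFun.indepFun_comp_of_disjoint_range (hf : iIndepFun f P)
    (hmeas : ∀ i, Measurable (f i)) {κ κ' : Type*} {g : κ → ι} {g' : κ' → ι}
    (hd : Disjoint (Set.range g) (Set.range g')) :
    IndepFun (fun ω k => f (g k) ω) (fun ω k => f (g' k) ω) P := by
  have hsup := indep_iSup_of_disjoint (fun i => (hmeas i).comap_le)
    ((iIndepFun_iff_iIndep _ _ _).mp hf) hd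
  rw [IndepFun_iff_Indep]
  exact indep_of_indep_of_le_right (indep_of_indep_of_le_left hsup
    (MeasurableSpace.comap_pi_comp_le_iSup g)) (MeasurableSpace.comap_pi_comp_le_iSup g')

end Independence

section Density

open scoped symmDiff Function

variable {α E : Type*} {m : MeasurableSpace α} {μ : Measure α} [IsFiniteMeasure μ]
  [NormedAddCommGroup E] {p : ℝ≥0∞} [Fact (1 ≤ p)] {V : AddSubgroup (Lp E p μ)}

theorem MeasureTheory.indicatorConstLp_iUnion_mem (hp : p ≠ ∞) (hV : IsClosed (V : Set (Lp E p μ)))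
    {f : ℕ → Set α} (hdisj : Pairwise (Disjoint on f)) (hf : ∀ i, MeasurableSet (f i))
    (hfV : ∀ i c, indicatorConstLp p (hf i) (measure_ne_top μ _) c ∈ V) (c : E) :
    indicatorConstLp p (MeasurableSet.iUnion hf) (measure_ne_top μ _) c ∈ V := by
  have hS : ∀ k, MeasurableSet (⋃ i ∈ Finset.range k, f i) := fun k =>
    Finset.measurableSet_biUnion _ fun i _ => hf i
  have hSV : ∀ k, indicatorConstLp p (hS k) (measure_ne_top μ _) c ∈ V := by
    intro k
    induction k with
    | zero => simp
    | succ k ih =>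
      have hdisj' : Disjoint (f k) (⋃ i ∈ Finset.range k, f i) := by
        simp only [Set.disjoint_iUnion_right, Finset.mem_range]
        exact fun i hi => hdisj (by omega)
      simp_rw [Finset.range_add_one, Finset.set_biUnion_insert]
      rw [indicatorConstLp_disjoint_union (hf k) (hS k) (measure_ne_top μ _)
        (measure_ne_top μ _) hdisj']
      exact V.add_mem (hfV k c) ih
  have htail : Tendsto (fun k => μ ((⋃ i ∈ Finset.range k, f i) ∆ ⋃ i, f i)) atTop (𝓝 0) := by
    refine tendsto_of_tendsto_of_tendsto_of_le_of_le tendsto_const_nhds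
      (tendsto_measure_biUnion_Ici_zero_of_pairwise_disjoint
        (fun i => (hf i).nullMeasurableSet) hdisj) (fun _ => zero_le) fun k => measure_mono ?_
    intro x hx
    simp only [Set.mem_symmDiff, Set.mem_iUnion, Finset.mem_range] at hx
    simp only [Set.mem_iUnion]
    grind
  exact hV.mem_of_tendsto (tendsto_indicatorConstLp_set hp htail) (Eventually.of_forall hSV)

theorem MeasureTheory.Lp.mem_of_indicatorConstLp_mem_of_generateFrom (hp : p ≠ ∞)
    (hV : IsClosed (V : Set (Lp E p μ))) {C : Set (Set α)} (hgen : m = .generateFrom C)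
    (hC : IsPiSystem C) (huniv : Set.univ ∈ C)
    (hCV : ∀ s ∈ C, ∀ (hs : MeasurableSet s) (c : E),
      indicatorConstLp p hs (measure_ne_top μ s) c ∈ V) (f : Lp E p μ) : f ∈ V := by
  have hind : ∀ s (hs : MeasurableSet s) (c : E),
      indicatorConstLp p hs (measure_ne_top μ s) c ∈ V := by
    refine MeasurableSpace.induction_on_inter hgen hC (fun c => by simp)
      (fun s hs c => hCV s hs _ c) (fun s hs hsV c => ?_)
      (fun f hdisj hf hfV c => indicatorConstLp_iUnion_mem hp hV hdisj hf hfV c)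
    have hcompl : indicatorConstLp p hs.compl (measure_ne_top μ _) c =
        indicatorConstLp p MeasurableSet.univ (measure_ne_top μ _) c -
          indicatorConstLp p hs (measure_ne_top μ _) c := by
      rw [eq_sub_iff_add_eq, ← indicatorConstLp_disjoint_union _ _ (measure_ne_top μ _)
        (measure_ne_top μ _) disjoint_compl_left]
      simp_rw [Set.compl_union_self]
    rw [hcompl]
    exact V.sub_mem (hCV _ huniv _ c) (hsV c)
  refine Lp.induction hp (· ∈ V) (fun c s hs _ => ?_)
    (fun _ _ _ _ _ hf hg => V.add_mem hf hg) hV f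
  rw [Lp.simpleFunc.coe_indicatorConst]
  exact hind s hs c

end Density

section Increments

variable {R M : Type*} [Ring R] [TopologicalSpace M] [AddCommGroup M] [Module R M]
  {P Q : ℕ → M →L[R] M} {a : M →L[R] M} {m n : ℕ} {f : M}

theorem apply_eq_self_of_le (hPP : ∀ {j k}, k ≤ j → ∀ f, P j (P k f) = P k f) {j : ℕ}
    (hmj : m ≤ j) (hf : P m f = f) : P j f = f := by
  rw [← hf, hPP hmj]

variable [IsTopologicalAddGroup M]

theorem apply_eq_zero_of_lt (hQ : ∀ k, Q (k + 1) = P (k + 1) - P k)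
    (hPP : ∀ {j k}, k ≤ j → ∀ f, P j (P k f) = P k f) (hf : P m f = f) {k : ℕ} (hmk : m < k) :
    Q k f = 0 := by
  obtain ⟨k, rfl⟩ : ∃ k', k = k' + 1 := ⟨k - 1, by omega⟩
  rw [hQ, sub_apply, apply_eq_self_of_le hPP (by omega) hf,
    apply_eq_self_of_le hPP (by omega) hf, sub_self]

theorem comp_comm_of_lt (hQ : ∀ k, Q (k + 1) = P (k + 1) - P k)
    (hcomm : ∀ k, n ≤ k → (P k).comp a = a.comp (P k)) {k : ℕ} (hnk : n < k) :
    (Q k).comp a = a.comp (Q k) := by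
  obtain ⟨k, rfl⟩ : ∃ k', k = k' + 1 := ⟨k - 1, by omega⟩
  rw [hQ, ContinuousLinearMap.sub_comp, ContinuousLinearMap.comp_sub, hcomm _ (by omega),
    hcomm _ (by omega)]

theorem sum_smul_sub_map_sum_smul (hQ : ∀ k, Q (k + 1) = P (k + 1) - P k)
    (hPP : ∀ {j k}, k ≤ j → ∀ f, P j (P k f) = P k f)
    (hcomm : ∀ k, n ≤ k → (P k).comp a = a.comp (P k)) (c : ℕ → R) (hf : P m f = f) :
    (∑ k ∈ Finset.Icc 1 (max m n), c k • Q k (a f)) - a (∑ k ∈ Finset.Icc 1 m, c k • Q k f) =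
      ∑ k ∈ Finset.Icc 1 n, c k • (Q k (a f) - a (Q k f)) := by
  have hext : ∑ k ∈ Finset.Icc 1 m, c k • Q k f = ∑ k ∈ Finset.Icc 1 (max m n), c k • Q k f := by
    refine Finset.sum_subset (Finset.Icc_subset_Icc_right (le_max_left _ _)) fun k hk hk' => ?_
    simp only [Finset.mem_Icc] at hk hk'
    rw [apply_eq_zero_of_lt hQ hPP hf (by omega), smul_zero]
  rw [hext, map_sum, ← Finset.sum_sub_distrib]
  simp_rw [map_smul, ← smul_sub]
  refine (Finset.sum_subset (Finset.Icc_subset_Icc_right (le_max_right _ _))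
    fun k hk hk' => ?_).symm
  simp only [Finset.mem_Icc] at hk hk'
  rw [← ContinuousLinearMap.comp_apply, comp_comm_of_lt hQ hcomm (by omega),
    ContinuousLinearMap.comp_apply, sub_self, smul_zero]

end Increments

section Splice

theorem splice_restrict_tail (n : ℕ) (z : ∀ j, X j) :
    splice n (fun i : Fin (n + 1) => z i) (fun j => z (n + 1 + j)) = z := by
  funext j
  unfold splice
  split_ifs
  · rfl
  · exact cast_eq_iff_heq.mpr (congr_arg_heq z (by omega))

theorem splice_apply_of_lt (n : ℕ) (x : ∀ i : Fin (n + 1), X i) (y : ∀ j, X (n + 1 + j))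
    {j : ℕ} (h : j < n + 1) : splice n x y j = x ⟨j, h⟩ :=
  dif_pos h

theorem splice_apply_add (n : ℕ) (x : ∀ i : Fin (n + 1), X i) (y : ∀ j, X (n + 1 + j))
    (j : ℕ) : splice n x y (n + 1 + j) = y j :=
  (dif_neg (by omega)).trans (cast_eq_iff_heq.mpr (congr_arg_heq y (by omega)))

theorem restrict_splice_of_le {k j : ℕ} (hkj : k ≤ j) (z : ∀ i, X i) (y : ∀ t, X (j + 1 + t)) :
    (fun i : Fin (k + 1) => splice j (fun i : Fin (j + 1) => z i) y i) =
      fun i : Fin (k + 1) => z i :=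
  funext fun i => splice_apply_of_lt j _ y (by omega)

theorem tail_splice_eq_spliceMid {n j : ℕ} (hnj : n ≤ j) (z : ∀ i, X i)
    (w : ∀ t, X (j + 1 + t)) :
    (fun t => splice j (fun i : Fin (j + 1) => z i) w (n + 1 + t)) =
      spliceMid hnj (fun t => z (n + 1 + t)) w := by
  funext t
  by_cases ht : t < j - n
  · rw [spliceMid, dif_pos ht, splice_apply_of_lt j _ _ (by omega)]
  · simp only [splice, spliceMid, dif_neg ht, dif_neg (show ¬n + 1 + t < j + 1 by omega)]
    exact cast_eq_iff_heq.mpr ((congr_arg_heq w (by omega)).trans (cast_heq _ _).symm)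

variable [∀ j, MeasurableSpace (X j)]

theorem measurable_splice (n : ℕ) :
    Measurable fun q : (∀ i : Fin (n + 1), X i) × (∀ j, X (n + 1 + j)) => splice n q.1 q.2 := by
  refine measurable_pi_lambda _ fun j => ?_
  by_cases h : j < n + 1
  · simp only [splice, dif_pos h]
    exact (measurable_pi_apply _).comp measurable_fst
  · simp only [splice, dif_neg h]
    exact (measurable_cast_congrArg (Y := X) (by omega : n + 1 + (j - (n + 1)) = j)).comp
      ((measurable_pi_apply _).comp measurable_snd)

theorem measurable_spliceMid {n m : ℕ} (hnm : n ≤ m) :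
    Measurable fun q : (∀ j, X (n + 1 + j)) × (∀ j, X (m + 1 + j)) => spliceMid hnm q.1 q.2 := by
  refine measurable_pi_lambda _ fun j => ?_
  by_cases h : j < m - n
  · simp only [spliceMid, dif_pos h]
    exact (measurable_pi_apply _).comp measurable_fst
  · simp only [spliceMid, dif_neg h]
    exact (measurable_cast_congrArg (Y := X) (by omega : m + 1 + (j - (m - n)) = n + 1 + j)).comp
      ((measurable_pi_apply _).comp measurable_snd)

def splitAt (n : ℕ) : (∀ j, X j) ≃ᵐ (∀ i : Fin (n + 1), X i) × (∀ j, X (n + 1 + j)) where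
  toFun z := (fun i => z i, fun j => z (n + 1 + j))
  invFun q := splice n q.1 q.2
  left_inv := splice_restrict_tail n
  right_inv q := Prod.ext (funext fun i => splice_apply_of_lt n q.1 q.2 i.isLt)
    (funext (splice_apply_add n q.1 q.2))
  measurable_toFun := by
    change Measurable fun z : ∀ j, X j => ((fun i : Fin (n + 1) => z i), fun j => z (n + 1 + j))
    fun_prop
  measurable_invFun := measurable_splice n

end Splice

section SplitMeasure

variable [∀ j, MeasurableSpace (X j)] {μ : ∀ j, Measure (X j)} [∀ j, IsProbabilityMeasure (μ j)]
  {νall : Measure (∀ j, X j)}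

instance (n : ℕ) : IsProbabilityMeasure (muLe μ n) := by
  unfold muLe; infer_instance

theorem measurePreserving_restrict_fin (hνall : IsProductMeasure μ νall) (n : ℕ) :
    MeasurePreserving (fun z (i : Fin (n + 1)) => z i) νall (muLe μ n) :=
  ⟨measurable_pi_lambda _ fun _ => measurable_pi_apply _, by
    rw [hνall.map_comp_eq_infinitePi Fin.val_injective, Measure.infinitePi_eq_pi]; rfl⟩

theorem measurePreserving_splitAt [IsProbabilityMeasure νall] (hνall : IsProductMeasure μ νall)
    (n : ℕ) {ν : Measure (∀ j, X (n + 1 + j))}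
    (hν : IsProductMeasure (fun j => μ (n + 1 + j)) ν) :
    MeasurePreserving (splitAt n) νall ((muLe μ n).prod ν) := by
  have hdisj : Disjoint (Set.range (Fin.val : Fin (n + 1) → ℕ)) (Set.range (n + 1 + ·)) := by
    rw [Set.disjoint_left]
    rintro _ ⟨i, rfl⟩ ⟨j, hj : n + 1 + j = i⟩
    have := i.isLt
    omega
  have hind := hνall.iIndepFun_eval.indepFun_comp_of_disjoint_range
    (fun i => measurable_pi_apply i) hdisj
  have hmeas : ∀ {κ : Type} (g : κ → ℕ), Measurable fun (z : ∀ j, X j) k => z (g k) :=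
    fun _ => measurable_pi_lambda _ fun _ => measurable_pi_apply _
  refine ⟨(splitAt n).measurable, ?_⟩
  change νall.map (fun z => ((fun i : Fin (n + 1) => z i), fun j => z (n + 1 + j))) = _
  rw [(ProbabilityTheory.indepFun_iff_map_prod_eq_prod_map_map (hmeas _).aemeasurable
      (hmeas _).aemeasurable).mp hind, (measurePreserving_restrict_fin hνall n).map_eq,
    hνall.map_comp_eq_infinitePi (add_right_injective (n + 1)), ← hν.eq_infinitePi]

end SplitMeasure

section PnFun

variable [∀ j, MeasurableSpace (X j)] (νtail : ∀ k, Measure (∀ j : ℕ, X (k + j)))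

theorem pnFun_tensFun {n j : ℕ} (hnj : n ≤ j) (ξ : (∀ i : Fin (n + 1), X i) → ℂ)
    (η : (∀ t, X (n + 1 + t)) → ℂ) :
    PnFun νtail j (tensFun n ξ η) = tensFun n ξ (PtailFun νtail hnj η) := by
  funext z
  change ∫ y, tensFun n ξ η (splice j (fun i : Fin (j + 1) => z i) y) ∂νtail (j + 1) =
    ξ (fun i => z i) * ∫ w, η (spliceMid hnj (fun t => z (n + 1 + t)) w) ∂νtail (j + 1)
  rw [← integral_const_mul]
  congr 1
  funext y
  exact congrArg₂ (· * ·) (congrArg ξ (restrict_splice_of_le hnj z y))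
    (congrArg η (tail_splice_eq_spliceMid hnj z y))

variable [∀ k, IsProbabilityMeasure (νtail k)]

theorem pnFun_pnFun {k j : ℕ} (hkj : k ≤ j) (g : (∀ i, X i) → ℂ) :
    PnFun νtail j (PnFun νtail k g) = PnFun νtail k g := by
  funext z
  have hconst : ∀ y, PnFun νtail k g (splice j (fun i : Fin (j + 1) => z i) y) =
      PnFun νtail k g z := fun y =>
    congrArg (piFun νtail k g) (restrict_splice_of_le hkj z y)
  simp only [PnFun, iotaFun, piFun] at hconst ⊢
  simp [hconst]

variable {νtail} {n m : ℕ} (hnm : n ≤ m) {η : (∀ j, X (n + 1 + j)) → ℂ}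

theorem stronglyMeasurable_ptailFun (hη : StronglyMeasurable η) :
    StronglyMeasurable (PtailFun νtail hnm η) :=
  (hη.comp_measurable (measurable_spliceMid hnm)).integral_prod_right'

theorem norm_ptailFun_le {C : ℝ} (hC : ∀ y, ‖η y‖ ≤ C) (y : ∀ j, X (n + 1 + j)) :
    ‖PtailFun νtail hnm η y‖ ≤ C := by
  simpa [PtailFun] using
    norm_integral_le_of_norm_le_const (μ := νtail (m + 1)) (ae_of_all _ fun w => hC _)

end PnFun

section LpTensor

variable [∀ j, MeasurableSpace (X j)] {μ : ∀ j, Measure (X j)} [∀ j, IsProbabilityMeasure (μ j)]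
  {νall : Measure (∀ j, X j)} {p : ℝ≥0∞}

theorem memLp_tensFun (hνall : IsProductMeasure μ νall) {n : ℕ}
    {ξ : (∀ i : Fin (n + 1), X i) → ℂ} (hξ : MemLp ξ p (muLe μ n))
    {η : (∀ j, X (n + 1 + j)) → ℂ} (hη : StronglyMeasurable η) {C : ℝ} (hC : ∀ y, ‖η y‖ ≤ C) :
    MemLp (tensFun n ξ η) p νall := by
  have hξ' := hξ.comp_measurePreserving (measurePreserving_restrict_fin hνall n)
  have hη' : StronglyMeasurable fun z : ∀ j, X j => η fun j => z (n + 1 + j) :=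
    hη.comp_measurable (measurable_pi_lambda _ fun _ => measurable_pi_apply _)
  refine hξ'.of_le_mul (c := C) (hξ'.1.mul hη'.aestronglyMeasurable) (ae_of_all _ fun z => ?_)
  rw [tensFun, norm_mul, mul_comm]
  exact mul_le_mul_of_nonneg_right (hC _) (norm_nonneg _)

variable [IsProbabilityMeasure νall] {νtail : ∀ k, Measure (∀ j : ℕ, X (k + j))}
  [∀ k, IsProbabilityMeasure (νtail k)]

theorem pnFun_ae_eq_of_ae_eq (hνall : IsProductMeasure μ νall) {k : ℕ}
    (hν : IsProductMeasure (fun j => μ (k + 1 + j)) (νtail (k + 1)))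
    {g₁ g₂ : (∀ j, X j) → ℂ} (h : g₁ =ᵐ[νall] g₂) :
    PnFun νtail k g₁ =ᵐ[νall] PnFun νtail k g₂ := by
  have hsplice : ∀ᵐ x ∂muLe μ k, ∀ᵐ y ∂νtail (k + 1), g₁ (splice k x y) = g₂ (splice k x y) :=
    Measure.ae_ae_of_ae_prod
      ((measurePreserving_splitAt hνall k hν).symm.quasiMeasurePreserving.ae_eq h)
  exact (measurePreserving_restrict_fin hνall k).quasiMeasurePreserving.ae_eq
    (hsplice.mono fun x hx => integral_congr_ae hx)

theorem apply_apply_of_le (hνall : IsProductMeasure μ νall)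
    (hνtail : ∀ k, IsProductMeasure (fun j => μ (k + j)) (νtail k))
    {P : ℕ → Lp ℂ p νall → Lp ℂ p νall} (hP : ∀ k f, ⇑(P k f) =ᵐ[νall] PnFun νtail k ⇑f)
    {j k : ℕ} (hkj : k ≤ j) (f : Lp ℂ p νall) : P j (P k f) = P k f := by
  ext1
  calc ⇑(P j (P k f)) =ᵐ[νall] PnFun νtail j ⇑(P k f) := hP j _
    _ =ᵐ[νall] PnFun νtail j (PnFun νtail k ⇑f) :=
      pnFun_ae_eq_of_ae_eq hνall (hνtail (j + 1)) (hP k f)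
    _ = PnFun νtail k ⇑f := pnFun_pnFun νtail hkj _
    _ =ᵐ[νall] ⇑(P k f) := (hP k f).symm

theorem apply_toLp_tensFun (hνall : IsProductMeasure μ νall) {k : ℕ}
    (hν : IsProductMeasure (fun j => μ (k + 1 + j)) (νtail (k + 1)))
    {P : Lp ℂ p νall → Lp ℂ p νall} (hP : ∀ f, ⇑(P f) =ᵐ[νall] PnFun νtail k ⇑f)
    {n : ℕ} (hnk : n ≤ k) {ξ : (∀ i : Fin (n + 1), X i) → ℂ} {η : (∀ j, X (n + 1 + j)) → ℂ}
    (h₁ : MemLp (tensFun n ξ η) p νall) (h₂ : MemLp (tensFun n ξ (PtailFun νtail hnk η)) p νall) :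
    P (h₁.toLp _) = h₂.toLp _ := by
  ext1
  calc ⇑(P (h₁.toLp _)) =ᵐ[νall] PnFun νtail k ⇑(h₁.toLp _) := hP _
    _ =ᵐ[νall] PnFun νtail k (tensFun n ξ η) := pnFun_ae_eq_of_ae_eq hνall hν h₁.coeFn_toLp
    _ = tensFun n ξ (PtailFun νtail hnk η) := pnFun_tensFun νtail hnk ξ η
    _ =ᵐ[νall] ⇑(h₂.toLp _) := h₂.coeFn_toLp.symm

end LpTensor

-- `η` is taken bounded so that `P_{k,n} η` is again in the class, with no `L^p` estimate needed.
def boundedTensors [∀ j, MeasurableSpace (X j)] (p : ℝ≥0∞) (μ : ∀ j, Measure (X j))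
    (νall : Measure (∀ j, X j)) (n : ℕ) : Set (Lp ℂ p νall) :=
  {f | ∃ (ξ : Lp ℂ p (muLe μ n)) (η : (∀ j, X (n + 1 + j)) → ℂ) (C : ℝ),
    StronglyMeasurable η ∧ (∀ y, ‖η y‖ ≤ C) ∧ ∃ h : MemLp (tensFun n ⇑ξ η) p νall, f = h.toLp _}

section Commutation

variable [∀ j, MeasurableSpace (X j)] {μ : ∀ j, Measure (X j)} [∀ j, IsProbabilityMeasure (μ j)]
  {νall : Measure (∀ j, X j)} [IsProbabilityMeasure νall] {p : ℝ≥0∞} [Fact (1 ≤ p)]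

theorem dense_span_boundedTensors (hp : p ≠ ∞) (hνall : IsProductMeasure μ νall) (n : ℕ) :
    Dense (Submodule.span ℂ (boundedTensors p μ νall n) : Set (Lp ℂ p νall)) := by
  set C : Set (Set (∀ j, X j)) := (splitAt n ⁻¹' ·) ''
    Set.image2 (· ×ˢ ·) {A | MeasurableSet A} {B | MeasurableSet B}
  have hgen : MeasurableSpace.pi = MeasurableSpace.generateFrom C := by
    rw [← MeasurableSpace.comap_generateFrom, generateFrom_prod,
      (splitAt n).measurableEmbedding.comap_eq]
  have hrect : ∀ s ∈ C, ∀ (hs : MeasurableSet s) (c : ℂ),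
      indicatorConstLp p hs (measure_ne_top νall s) c ∈ boundedTensors p μ νall n := by
    rintro _ ⟨_, ⟨A, hA : MeasurableSet A, B, hB : MeasurableSet B, rfl⟩, rfl⟩ hs c
    have hη : StronglyMeasurable (B.indicator fun _ => (1 : ℂ)) :=
      stronglyMeasurable_const.indicator hB
    have hη1 : ∀ y, ‖B.indicator (fun _ => (1 : ℂ)) y‖ ≤ 1 := fun y =>
      (norm_indicator_le_norm_self _ y).trans norm_one.le
    have h := memLp_tensFun hνall (Lp.memLp (indicatorConstLp p hA (measure_ne_top _ A) c)) hη hη1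
    refine ⟨_, _, 1, hη, hη1, h, ?_⟩
    ext1
    filter_upwards [indicatorConstLp_coeFn (μ := νall) (hs := hs) (c := c), h.coeFn_toLp,
      (measurePreserving_restrict_fin hνall n).quasiMeasurePreserving.ae_eq
        (indicatorConstLp_coeFn (hs := hA) (c := c) (hμs := measure_ne_top _ A))] with z h₁ h₂ h₃
    simp only [Function.comp_apply] at h₃
    rw [h₁, h₂, tensFun, h₃]
    by_cases hzA : (fun i : Fin (n + 1) => z i) ∈ A <;>
      by_cases hzB : (fun j => z (n + 1 + j)) ∈ B <;> simp [Set.indicator, splitAt, hzA, hzB]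
  rw [Submodule.dense_iff_topologicalClosure_eq_top, Submodule.eq_top_iff']
  exact Lp.mem_of_indicatorConstLp_mem_of_generateFrom
    (V := (Submodule.span ℂ (boundedTensors p μ νall n)).topologicalClosure.toAddSubgroup) hp
    (Submodule.isClosed_topologicalClosure _) hgen (isPiSystem_prod.comap _)
    ⟨_, Set.mem_image2_of_mem (MeasurableSet.univ (α := ∀ i : Fin (n + 1), X i))
      (MeasurableSet.univ (α := ∀ j, X (n + 1 + j))), by simp⟩
    fun s hs hs' c => Submodule.le_topologicalClosure _ (Submodule.subset_span (hrect s hs hs' c))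

theorem comp_comm_of_ae_eq_pnFun (hp : p ≠ ∞) (hνall : IsProductMeasure μ νall)
    {νtail : ∀ k, Measure (∀ j : ℕ, X (k + j))} [∀ k, IsProbabilityMeasure (νtail k)]
    (hνtail : ∀ k, IsProductMeasure (fun j => μ (k + j)) (νtail k)) {n : ℕ}
    {a : Lp ℂ p νall →L[ℂ] Lp ℂ p νall} {c : Lp ℂ p (muLe μ n) →L[ℂ] Lp ℂ p (muLe μ n)}
    (hac : ∀ (ξ : Lp ℂ p (muLe μ n)) (η : (∀ j : ℕ, X (n + 1 + j)) → ℂ),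
      MemLp η p (νtail (n + 1)) →
      ∀ (h1 : MemLp (tensFun n (⇑ξ) η) p νall) (h2 : MemLp (tensFun n (⇑(c ξ)) η) p νall),
        a (MemLp.toLp _ h1) = MemLp.toLp _ h2)
    {k : ℕ} (hnk : n ≤ k) {P : Lp ℂ p νall →L[ℂ] Lp ℂ p νall}
    (hP : ∀ f, ⇑(P f) =ᵐ[νall] PnFun νtail k ⇑f) :
    P.comp a = a.comp P := by
  refine ContinuousLinearMap.ext_on (dense_span_boundedTensors hp hνall n) ?_
  rintro _ ⟨ξ, η, C, hη, hC, h, rfl⟩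
  have hPη := stronglyMeasurable_ptailFun (νtail := νtail) hnk hη
  have hPC := norm_ptailFun_le (νtail := νtail) hnk hC
  have hcξ := memLp_tensFun hνall (Lp.memLp (c ξ)) hη hC
  have h' := memLp_tensFun hνall (Lp.memLp ξ) hPη hPC
  have hc' := memLp_tensFun hνall (Lp.memLp (c ξ)) hPη hPC
  simp only [ContinuousLinearMap.comp_apply]
  rw [hac ξ η (.of_bound hη.aestronglyMeasurable C (ae_of_all _ hC)) h hcξ,
    apply_toLp_tensFun hνall (hνtail (k + 1)) hP hnk hcξ hc',
    apply_toLp_tensFun hνall (hνtail (k + 1)) hP hnk h h',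
    hac ξ _ (.of_bound hPη.aestronglyMeasurable C (ae_of_all _ hPC)) h' hc']

end Commutation

theorem stmt16_general (p : ℝ≥0∞) [Fact (1 ≤ p)] (hp' : p ≠ ∞)
    {X : ℕ → Type*} [∀ j, MeasurableSpace (X j)]
    (μ : ∀ j, Measure (X j)) [∀ j, IsProbabilityMeasure (μ j)]
    (νall : Measure (∀ j, X j)) [IsProbabilityMeasure νall]
    (hνall : IsProductMeasure μ νall)
    (νtail : ∀ k, Measure (∀ j : ℕ, X (k + j))) [∀ k, IsProbabilityMeasure (νtail k)]
    (hνtail : ∀ k, IsProductMeasure (fun j => μ (k + j)) (νtail k))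
    (α : ℕ → ℝ)
    (n : ℕ)
    (a : Lp ℂ p νall →L[ℂ] Lp ℂ p νall)
    (c : Lp ℂ p (muLe μ n) →L[ℂ] Lp ℂ p (muLe μ n))
    (hac : ∀ (ξ : Lp ℂ p (muLe μ n)) (η : (∀ j : ℕ, X (n + 1 + j)) → ℂ),
      MemLp η p (νtail (n + 1)) →
      ∀ (h1 : MemLp (tensFun n (⇑ξ) η) p νall)
        (h2 : MemLp (tensFun n (⇑(c ξ)) η) p νall),
        a (MemLp.toLp _ h1) = MemLp.toLp _ h2)
    (Phat : ℕ → (Lp ℂ p νall →L[ℂ] Lp ℂ p νall))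
    (hPhat : ∀ (k : ℕ) (f : Lp ℂ p νall), ⇑(Phat k f) =ᵐ[νall] PnFun νtail k ⇑f)
    (Qhat : ℕ → (Lp ℂ p νall →L[ℂ] Lp ℂ p νall))
    (hQ : ∀ k : ℕ, Qhat (k + 1) = Phat (k + 1) - Phat k) :
    (∀ m : ℕ, n ≤ m → ∀ f : Lp ℂ p νall, Phat m f = f → Phat m (a f) = a f) ∧
    (∀ (m : ℕ) (f : Lp ℂ p νall), Phat m f = f →
      (∑ k ∈ Finset.Icc 1 (max m n), ((α k : ℂ)) • Qhat k (a f))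
          - a (∑ k ∈ Finset.Icc 1 m, ((α k : ℂ)) • Qhat k f)
        = ∑ k ∈ Finset.Icc 1 n, ((α k : ℂ)) • (Qhat k (a f) - a (Qhat k f))) ∧
    (∃ C : ℝ, 0 ≤ C ∧ ∀ (m : ℕ) (f : Lp ℂ p νall), Phat m f = f →
      ‖(∑ k ∈ Finset.Icc 1 (max m n), ((α k : ℂ)) • Qhat k (a f))
          - a (∑ k ∈ Finset.Icc 1 m, ((α k : ℂ)) • Qhat k f)‖ ≤ C * ‖f‖) := by
  have hPP : ∀ {j k}, k ≤ j → ∀ f, Phat j (Phat k f) = Phat k f := fun hkj f =>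
    apply_apply_of_le hνall hνtail (P := fun k => Phat k) hPhat hkj f
  have hcomm : ∀ k, n ≤ k → (Phat k).comp a = a.comp (Phat k) := fun k hnk =>
    comp_comm_of_ae_eq_pnFun hp' hνall hνtail hac hnk (hPhat k)
  have hsum := fun m f (hf : Phat m f = f) =>
    sum_smul_sub_map_sum_smul hQ hPP hcomm (fun k => (α k : ℂ)) hf
  refine ⟨fun m hnm f hf => ?_, hsum, ?_⟩
  · rw [← ContinuousLinearMap.comp_apply, hcomm m hnm, ContinuousLinearMap.comp_apply, hf]
  · set T := ∑ k ∈ Finset.Icc 1 n, (α k : ℂ) • ((Qhat k).comp a - a.comp (Qhat k))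
    refine ⟨‖T‖, norm_nonneg T, fun m f hf => ?_⟩
    have hTf : T f = ∑ k ∈ Finset.Icc 1 n, (α k : ℂ) • (Qhat k (a f) - a (Qhat k f)) := by
      simp only [T, FunLike.coe_sum, Finset.sum_apply, FunLike.coe_smul, Pi.smul_apply,
        FunLike.coe_sub, Pi.sub_apply, ContinuousLinearMap.coe_comp, Function.comp_apply]
    rw [hsum m f hf, ← hTf]
    exact T.le_opNorm f

theorem stmt16 (p : ℝ≥0∞) [Fact (1 ≤ p)] (hp' : p ≠ ∞)
    {X : ℕ → Type*} [∀ j, MeasurableSpace (X j)]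
    (μ : ∀ j, Measure (X j)) [∀ j, IsProbabilityMeasure (μ j)]
    (νall : Measure (∀ j, X j)) [IsProbabilityMeasure νall]
    (hνall : IsProductMeasure μ νall)
    (νtail : ∀ k, Measure (∀ j : ℕ, X (k + j))) [∀ k, IsProbabilityMeasure (νtail k)]
    (hνtail : ∀ k, IsProductMeasure (fun j => μ (k + j)) (νtail k))
    (α : ℕ → ℝ) (hα0 : α 0 = 0)
    (n : ℕ)
    (a : Lp ℂ p νall →L[ℂ] Lp ℂ p νall)
    (c : Lp ℂ p (muLe μ n) →L[ℂ] Lp ℂ p (muLe μ n))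
    (hac : ∀ (ξ : Lp ℂ p (muLe μ n)) (η : (∀ j : ℕ, X (n + 1 + j)) → ℂ),
      MemLp η p (νtail (n + 1)) →
      ∀ (h1 : MemLp (tensFun n (⇑ξ) η) p νall)
        (h2 : MemLp (tensFun n (⇑(c ξ)) η) p νall),
        a (MemLp.toLp _ h1) = MemLp.toLp _ h2)
    (Phat : ℕ → (Lp ℂ p νall →L[ℂ] Lp ℂ p νall))
    (hPhat : ∀ (k : ℕ) (f : Lp ℂ p νall), ⇑(Phat k f) =ᵐ[νall] PnFun νtail k ⇑f)
    (Qhat : ℕ → (Lp ℂ p νall →L[ℂ] Lp ℂ p νall))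
    (hQ0 : Qhat 0 = Phat 0) (hQ : ∀ k : ℕ, Qhat (k + 1) = Phat (k + 1) - Phat k) :
    (∀ m : ℕ, n ≤ m → ∀ f : Lp ℂ p νall, Phat m f = f → Phat m (a f) = a f) ∧
    (∀ (m : ℕ) (f : Lp ℂ p νall), Phat m f = f →
      (∑ k ∈ Finset.Icc 1 (max m n), ((α k : ℂ)) • Qhat k (a f))
          - a (∑ k ∈ Finset.Icc 1 m, ((α k : ℂ)) • Qhat k f)
        = ∑ k ∈ Finset.Icc 1 n, ((α k : ℂ)) • (Qhat k (a f) - a (Qhat k f))) ∧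
    (∃ C : ℝ, 0 ≤ C ∧ ∀ (m : ℕ) (f : Lp ℂ p νall), Phat m f = f →
      ‖(∑ k ∈ Finset.Icc 1 (max m n), ((α k : ℂ)) • Qhat k (a f))
          - a (∑ k ∈ Finset.Icc 1 m, ((α k : ℂ)) • Qhat k f)‖ ≤ C * ‖f‖) :=
  stmt16_general p hp' μ νall hνall νtail hνtail α n a c hac Phat hPhat Qhat hQ
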